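/- arXiv:2103.14014 — 2 statements merged into one kernel-verified Lean document; each statement's English description precedes it below -/
import Mathlib

section
/- Fix a constant 0 < p ≤ 1 − 1/e² and let b = 1/(1−p). Treating α₀ and f as functions of a continuous real variable n, there exist a constant K and n₀ such that for all real n ≥ n₀, |df/dn − 1/α₀(n) − 1/α₀(n)²| ≤ K/log³ n. -/
open Filter Real

/-- `α₀(n) = 2 log_b n − 2 log_b log_b n + 2 log_b (e/2) + 1`. -/
noncomputable def alpha0 (b : ℝ) (x : ℝ) : ℝ :=
  2 * Real.logb b x - 2 * Real.logb b (Real.logb b x) + 2 * Real.logb b (Real.exp 1 / 2) + 1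

/-- `f(n) = n / (2 log_b n − 2 log_b log_b n − 2 log_b 2)`, as a function of a real
variable `n`. -/
noncomputable def fEst (b : ℝ) (x : ℝ) : ℝ :=
  x / (2 * Real.logb b x - 2 * Real.logb b (Real.logb b x) - 2 * Real.logb b 2)

lemma log_le_quarter (t : ℝ) (ht : 64 ≤ t) : Real.log t ≤ t/4 := by
  have ht0 : (0:ℝ) < t := by linarith
  have hs : (8:ℝ) ≤ Real.sqrt t := by
    rw [show (8:ℝ) = Real.sqrt 64 by
      rw [show (64:ℝ) = 8^2 by norm_num, Real.sqrt_sq (by norm_num : (0:ℝ) ≤ 8)]]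
    exact Real.sqrt_le_sqrt ht
  have h1 : Real.log t = 2 * Real.log (Real.sqrt t) := by
    rw [Real.log_sqrt ht0.le]; ring
  have h2 : Real.log (Real.sqrt t) ≤ Real.sqrt t - 1 :=
    Real.log_le_sub_one_of_pos (by positivity)
  have h3 : Real.sqrt t * Real.sqrt t = t := Real.mul_self_sqrt ht0.le
  nlinarith

lemma key_est (a t G : ℝ) (ha : 0 < a) (ht : 1 ≤ t) (hG : a*t/2 ≤ G) :
    |(G - a*(1-1/t))/G^2 - 1/(G+a+1) - 1/(G+a+1)^2|
      ≤ (8*(1+a^2)/a^3 + 16*(a+1)^2/a^3 + 4/a)/t^3 := by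
  have ht0 : 0 < t := by linarith
  have hG0 : 0 < G := lt_of_lt_of_le (by positivity) hG
  set A := G + a + 1 with hA
  have hA0 : 0 < A := by positivity
  have hAG : a*t/2 ≤ A := by simp only [hA]; linarith
  have hid : (G - a*(1-1/t))/G^2 - 1/A - 1/A^2
      = ((1-a^2)*G - a*(a+1)^2)/(G^2*A^2) + a/(G^2*t) := by
    field_simp
    ring
  rw [hid]
  have h1 : |((1-a^2)*G - a*(a+1)^2)/(G^2*A^2) + a/(G^2*t)|
      ≤ ((1+a^2)*G + a*(a+1)^2)/(G^2*A^2) + a/(G^2*t) := by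
    refine (abs_add_le _ _).trans ?_
    gcongr
    · rw [abs_div, abs_of_pos (by positivity : (0:ℝ) < G^2*A^2)]
      gcongr
      calc |(1-a^2)*G - a*(a+1)^2| ≤ |(1-a^2)*G| + |a*(a+1)^2| := abs_sub _ _
        _ ≤ (1+a^2)*G + a*(a+1)^2 := by
            rw [abs_mul, abs_mul, abs_of_pos hG0, abs_of_pos ha,
              abs_of_pos (by positivity : (0:ℝ) < (a+1)^2)]
            gcongr
            calc |1-a^2| ≤ |(1:ℝ)| + |a^2| := abs_sub _ _
              _ = 1 + a^2 := by rw [abs_one, abs_of_pos (by positivity)]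
    · rw [abs_of_pos (by positivity)]
  refine h1.trans ?_
  have d3 : (a*t/2)^3 ≤ G*A^2 := by
    calc (a*t/2)^3 = (a*t/2)*(a*t/2)^2 := by ring
      _ ≤ G*A^2 := by gcongr
  have d4 : (a*t/2)^4 ≤ G^2*A^2 := by
    calc (a*t/2)^4 = ((a*t/2)^2)*((a*t/2)^2) := by ring
      _ ≤ G^2*A^2 := by gcongr
  have d2 : (a*t/2)^2*t ≤ G^2*t := by
    have : (a*t/2)^2 ≤ G^2 := by gcongr
    nlinarith
  have e1 : (1+a^2)*G/(G^2*A^2) = (1+a^2)/(G*A^2) := by field_simp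
  have b1 : (1+a^2)/(G*A^2) ≤ (1+a^2)/((a*t/2)^3) := by gcongr
  have b2 : a*(a+1)^2/(G^2*A^2) ≤ a*(a+1)^2/((a*t/2)^4) := by gcongr
  have b3 : a/(G^2*t) ≤ a/((a*t/2)^2*t) := by gcongr
  have r1 : (1+a^2)/((a*t/2)^3) = (8*(1+a^2)/a^3)/t^3 := by field_simp; ring
  have r2 : a*(a+1)^2/((a*t/2)^4) ≤ (16*(a+1)^2/a^3)/t^3 := by
    rw [div_le_div_iff₀ (by positivity) (by positivity)]
    have h34 : t^3 ≤ t^4 := pow_le_pow_right₀ ht (by norm_num)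
    calc a*(a+1)^2 * t^3 ≤ a*(a+1)^2 * t^4 := by gcongr
      _ ≤ 16*(a+1)^2/a^3 * (a*t/2)^4 := by
          rw [div_mul_eq_mul_div, le_div_iff₀ (by positivity)]
          ring_nf
          nlinarith [mul_pos (pow_pos ha 5) (pow_pos ht0 4), sq_nonneg (a+1), pow_pos ht0 4]
  have r3 : a/((a*t/2)^2*t) = (4/a)/t^3 := by field_simp; ring
  calc ((1+a^2)*G + a*(a+1)^2)/(G^2*A^2) + a/(G^2*t)
      = (1+a^2)/(G*A^2) + a*(a+1)^2/(G^2*A^2) + a/(G^2*t) := by rw [add_div, e1]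
    _ ≤ (8*(1+a^2)/a^3)/t^3 + (16*(a+1)^2/a^3)/t^3 + (4/a)/t^3 :=
        add_le_add (add_le_add (b1.trans_eq r1) (b2.trans r2)) (b3.trans_eq r3)
    _ = (8*(1+a^2)/a^3 + 16*(a+1)^2/a^3 + 4/a)/t^3 := by rw [← add_div, ← add_div]

/-- Fix `0 < p ≤ 1 − 1/e²` and let `b = 1/(1−p)`.  There exist a constant
`K` and `n₀` such that for all real `n ≥ n₀`,
`|f'(n) − 1/α₀(n) − 1/α₀(n)²| ≤ K / log³ n`. -/
theorem deriv_fEst (p : ℝ) (hp0 : 0 < p) (hp : p ≤ 1 - 1 / Real.exp 1 ^ 2) :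
    ∃ K n₀ : ℝ, ∀ n : ℝ, n₀ ≤ n →
      |deriv (fEst (1 / (1 - p))) n - 1 / alpha0 (1 / (1 - p)) n
          - 1 / alpha0 (1 / (1 - p)) n ^ 2|
        ≤ K / Real.log n ^ 3 := by
  have hep : (0:ℝ) < 1 / Real.exp 1 ^ 2 := by positivity
  have h1p : 0 < 1 - p := by nlinarith
  set b := 1 / (1 - p) with hbdef
  have hb1 : 1 < b := (one_lt_div h1p).mpr (by linarith)
  set L := Real.log b with hLdef
  have hL : 0 < L := Real.log_pos hb1
  set a := 2/L with hadef
  have ha : 0 < a := by positivity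
  refine ⟨8*(1+a^2)/a^3 + 16*(a+1)^2/a^3 + 4/a,
    Real.exp (max 64 (4*Real.log (2/L))), ?_⟩
  intro n hn
  have hn0 : 0 < n := lt_of_lt_of_le (Real.exp_pos _) hn
  set t := Real.log n with htdef
  have htm : max 64 (4*Real.log (2/L)) ≤ t := by
    rw [htdef, ← Real.log_exp (max 64 (4*Real.log (2/L)))]
    exact Real.log_le_log (Real.exp_pos _) hn
  have ht64 : (64:ℝ) ≤ t := le_trans (le_max_left _ _) htm
  have htL : 4*Real.log (2/L) ≤ t := le_trans (le_max_right _ _) htm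
  have ht0 : (0:ℝ) < t := by linarith
  have ht1 : (1:ℝ) ≤ t := by linarith
  have hlogb : Real.logb b n = t/L := by rw [Real.logb]
  have hu : 0 < t/L := by positivity
  set G := 2 * Real.logb b n - 2 * Real.logb b (Real.logb b n) - 2 * Real.logb b 2 with hGdef
  have hGform : G = a * (t - Real.log t + Real.log L - Real.log 2) := by
    rw [hGdef, hlogb, Real.logb, Real.logb, Real.log_div (ne_of_gt ht0) (ne_of_gt hL), hadef]
    field_simp
    have hLL : L * (Real.log b)⁻¹ = 1 := mul_inv_cancel₀ hL.ne'
    linear_combination (-Real.log t + Real.log L - Real.log 2) * hLL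
  have hlogt : Real.log t ≤ t/4 := log_le_quarter t ht64
  have hlog2L : Real.log 2 - Real.log L ≤ t/4 := by
    have h := Real.log_div (two_ne_zero) (ne_of_gt hL)
    have : Real.log (2/L) ≤ t/4 := by linarith
    linarith [h ▸ this]
  have hG : a*t/2 ≤ G := by
    rw [hGform]
    have h5 : t/2 ≤ t - Real.log t + Real.log L - Real.log 2 := by linarith
    calc a*t/2 = a*(t/2) := by ring
      _ ≤ a*(t - Real.log t + Real.log L - Real.log 2) :=
          mul_le_mul_of_nonneg_left h5 ha.le
  have hG0 : 0 < G := lt_of_lt_of_le (by positivity) hG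
  have halpha : alpha0 b n = G + a + 1 := by
    rw [alpha0, hGdef, hadef]
    have h2 : Real.logb b (Real.exp 1 / 2) = (1 - Real.log 2) / L := by
      rw [Real.logb, Real.log_div (Real.exp_ne_zero 1) two_ne_zero, Real.log_exp]
    rw [h2]
    simp only [Real.logb]
    field_simp
    have hLL : L * (Real.log b)⁻¹ = 1 := mul_inv_cancel₀ hL.ne'
    linear_combination (2 * Real.log 2) * hLL
  -- the derivative
  have hlog : HasDerivAt Real.log n⁻¹ n := Real.hasDerivAt_log hn0.ne'
  have hlb1 : HasDerivAt (fun y => Real.logb b y) (n⁻¹/L) n := by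
    simp only [Real.logb]
    exact hlog.div_const L
  have hlog2 : HasDerivAt Real.log (t/L)⁻¹ (Real.logb b n) := by
    rw [hlogb]; exact Real.hasDerivAt_log (ne_of_gt hu)
  have hcomp : HasDerivAt (fun y => Real.log (Real.logb b y)) ((t/L)⁻¹ * (n⁻¹/L)) n :=
    hlog2.comp n hlb1
  have hlb2 : HasDerivAt (fun y => Real.logb b (Real.logb b y)) ((t/L)⁻¹ * (n⁻¹/L) / L) n := by
    simp only [Real.logb]
    exact hcomp.div_const L
  have hgd : HasDerivAt
      (fun y => 2 * Real.logb b y - 2 * Real.logb b (Real.logb b y) - 2 * Real.logb b 2)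
      (2*(n⁻¹/L) - 2*((t/L)⁻¹ * (n⁻¹/L) / L)) n :=
    ((hlb1.const_mul 2).sub (hlb2.const_mul 2)).sub_const _
  have hfd : HasDerivAt (fEst b)
      ((1*G - n*(2*(n⁻¹/L) - 2*((t/L)⁻¹ * (n⁻¹/L) / L)))/G^2) n := by
    have h := (hasDerivAt_id n).div hgd (ne_of_gt hG0)
    exact h
  have hderiv : deriv (fEst b) n = (G - a*(1-1/t))/G^2 := by
    rw [hfd.deriv, hadef]
    have hne : n ≠ 0 := hn0.ne'
    have htne : t ≠ 0 := ht0.ne'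
    have hLne : L ≠ 0 := hL.ne'
    field_simp
  rw [hderiv, halpha]
  exact key_est a t G ha ht1 hG
end

section
/- Fix a constant 0 < p ≤ 1 − 1/e². If (n_j) and (n'_j) are sequences of reals tending to infinity with n'_j/n_j → 1, then the derivative of f at n'_j satisfies f'(n'_j) = 1/α(n_j) + (1 − μ̂(n_j))/α(n_j)² + o(1/log² n_j) as j → ∞. -/
open Filter Real

/-- `α(n) = ⌊α₀(n)⌋`, as a natural number. -/
noncomputable def alphaNat (b : ℝ) (x : ℝ) : ℕ := (⌊alpha0 b x⌋).toNat

/-- `μ_t(x) = C(x,t) q^C(t,2)` extended to a real variable `x` via the falling factorial. -/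
noncomputable def muR (q : ℝ) (t : ℕ) (x : ℝ) : ℝ :=
  (∏ i ∈ Finset.range t, (x - i)) / (t.factorial : ℝ) * q ^ t.choose 2

/-- `μ̂(n) = log μ_{α(n)}(n) / log n`, so that `μ_{α(n)}(n) = n^μ̂(n)`. -/
noncomputable def muHat (q b : ℝ) (x : ℝ) : ℝ :=
  Real.log (muR q (alphaNat b x) x) / Real.log x

lemma loglog_div_log : Tendsto (fun x : ℝ => Real.log (Real.log x) / Real.log x) atTop (nhds 0) :=
  (Real.isLittleO_log_id_atTop.comp_tendsto Real.tendsto_log_atTop).tendsto_div_nhds_zero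


-- alpha0 * log b / (2 log x) → 1
lemma alpha0_norm (b : ℝ) (hb : 1 < b) :
    Tendsto (fun x => alpha0 b x * Real.log b / (2 * Real.log x)) atTop (nhds 1) := by
  have hLb : 0 < Real.log b := Real.log_pos hb
  have h1 : Tendsto (fun x : ℝ => 1 - (Real.log (Real.log x) - Real.log (Real.log b)) / Real.log x
      + (Real.logb b (Real.exp 1 / 2) + 1/2) * Real.log b / Real.log x) atTop (nhds 1) := by
    have hinv : Tendsto (fun x : ℝ => (Real.log x)⁻¹) atTop (nhds 0) :=
      tendsto_inv_atTop_zero.comp Real.tendsto_log_atTop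
    have h2 : Tendsto (fun x : ℝ => (Real.log (Real.log x) - Real.log (Real.log b)) / Real.log x)
        atTop (nhds 0) := by
      have := loglog_div_log.sub (hinv.const_mul (Real.log (Real.log b)))
      simpa [sub_div, div_eq_mul_inv, mul_comm, mul_sub] using this
    have h3 : Tendsto (fun x : ℝ => (Real.logb b (Real.exp 1 / 2) + 1/2) * Real.log b / Real.log x)
        atTop (nhds 0) := by
      have := hinv.const_mul ((Real.logb b (Real.exp 1 / 2) + 1/2) * Real.log b)
      simpa [div_eq_mul_inv, mul_comm] using this
    have := (tendsto_const_nhds (x := (1:ℝ))).sub h2 |>.add h3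
    simpa using this
  refine h1.congr' ?_
  filter_upwards [Real.tendsto_log_atTop.eventually_gt_atTop 1] with x hx
  have hlx : (0:ℝ) < Real.log x := lt_trans one_pos hx
  have hloglogb : Real.log (Real.logb b x) = Real.log (Real.log x) - Real.log (Real.log b) := by
    rw [Real.logb, Real.log_div (ne_of_gt hlx) (ne_of_gt hLb)]
  simp only [alpha0, Real.logb] at hloglogb ⊢
  rw [hloglogb]
  field_simp
  ring

/-- The denominator of `fEst`. -/
noncomputable def Dden (b : ℝ) (x : ℝ) : ℝ :=
  2 * Real.logb b x - 2 * Real.logb b (Real.logb b x) - 2 * Real.logb b 2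

lemma Dden_eq (b : ℝ) (x : ℝ) : Dden b x = alpha0 b x - (2 / Real.log b + 1) := by
  have h : Real.log (Real.exp 1 / 2) = 1 - Real.log 2 := by
    rw [Real.log_div (Real.exp_ne_zero 1) two_ne_zero, Real.log_exp]
  simp only [Dden, alpha0, Real.logb, h]
  ring

lemma deriv_fEst_eq (b : ℝ) (hb : 1 < b) (x : ℝ) (hx0 : 0 < x) (hx : 1 < Real.log x)
    (hlb : 0 < Real.logb b x) (hD : Dden b x ≠ 0) :
    deriv (fEst b) x = (Dden b x - (2 / Real.log b) * (1 - 1 / Real.log x)) / (Dden b x) ^ 2 := by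
  have hLb : 0 < Real.log b := Real.log_pos hb
  have hlx : (0:ℝ) < Real.log x := lt_trans one_pos hx
  -- inner function g x = log x / log b
  have hg : HasDerivAt (fun y : ℝ => Real.log y / Real.log b) (x⁻¹ / Real.log b) x :=
    (Real.hasDerivAt_log (ne_of_gt hx0)).div_const _
  have hgx : Real.log x / Real.log b ≠ 0 := by
    rw [← Real.logb]; exact ne_of_gt hlb
  have hout : HasDerivAt (fun y : ℝ => Real.log (Real.log y / Real.log b))
      ((Real.log x / Real.log b)⁻¹ * (x⁻¹ / Real.log b)) x :=
    HasDerivAt.comp (h₂ := Real.log) x (Real.hasDerivAt_log hgx) hg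
  have hDdiff : HasDerivAt (Dden b)
      (2 * (x⁻¹ / Real.log b)
        - 2 * ((Real.log x / Real.log b)⁻¹ * (x⁻¹ / Real.log b) / Real.log b)) x := by
    have : Dden b = fun y => 2 * (Real.log y / Real.log b)
        - 2 * (Real.log (Real.log y / Real.log b) / Real.log b) - 2 * Real.logb b 2 := by
      funext y; simp [Dden, Real.logb]
    rw [this]
    exact (((hg.const_mul 2).sub ((hout.div_const (Real.log b)).const_mul 2)).sub_const _)
  have hf : HasDerivAt (fEst b)
      ((1 * Dden b x - x * (2 * (x⁻¹ / Real.log b)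
        - 2 * ((Real.log x / Real.log b)⁻¹ * (x⁻¹ / Real.log b) / Real.log b))) / (Dden b x) ^ 2) x := by
    have : fEst b = fun y => y / Dden b y := by funext y; simp [fEst, Dden]
    rw [this]
    exact (hasDerivAt_id x).div hDdiff hD
  rw [hf.deriv]
  congr 1
  field_simp

lemma alpha0_atTop (b : ℝ) (hb : 1 < b) : Tendsto (alpha0 b) atTop atTop := by
  have hLb : 0 < Real.log b := Real.log_pos hb
  have hg : Tendsto (fun x : ℝ => 2 / Real.log b * Real.log x) atTop atTop :=
    Tendsto.const_mul_atTop (by positivity) Real.tendsto_log_atTop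
  have h := (alpha0_norm b hb).pos_mul_atTop one_pos hg
  refine h.congr' ?_
  filter_upwards [Real.tendsto_log_atTop.eventually_gt_atTop 0] with x hx
  field_simp


lemma alpha0_mul_log (b x : ℝ) (hb : 1 < b) : alpha0 b x * Real.log b = 2 * Real.log x
    - 2 * Real.log (Real.logb b x) + 2 - 2 * Real.log 2 + Real.log b := by
  have hLb : 0 < Real.log b := Real.log_pos hb
  have he2 : Real.log (Real.exp 1 / 2) = 1 - Real.log 2 := by
    rw [Real.log_div (Real.exp_ne_zero 1) two_ne_zero, Real.log_exp]
  simp only [alpha0, Real.logb, he2]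
  field_simp
  ring


set_option maxHeartbeats 1000000 in
/-- Main analytic lemma: `μ̂(n_j) - {α₀(n_j)} → 0`. -/
lemma muHat_sub_fract (b q : ℝ) (hb : 1 < b) (hq0 : 0 < q) (hqb : Real.log q = -Real.log b)
    (n : ℕ → ℝ) (hn : Tendsto n atTop atTop) :
    Tendsto (fun j => muHat q b (n j) - Int.fract (alpha0 b (n j))) atTop (nhds 0) := by
  have hLb : 0 < Real.log b := Real.log_pos hb
  set Lb := Real.log b with hLbdef
  set L : ℕ → ℝ := fun j => Real.log (n j) with hLdef
  set t : ℕ → ℕ := fun j => alphaNat b (n j) with htdef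
  set a : ℕ → ℝ := fun j => (t j : ℝ) with hadef
  set ε : ℕ → ℝ := fun j => Int.fract (alpha0 b (n j)) with hεdef
  have hLtop : Tendsto L atTop atTop := Real.tendsto_log_atTop.comp hn
  have hinvL : Tendsto (fun j => (L j)⁻¹) atTop (nhds 0) := tendsto_inv_atTop_zero.comp hLtop
  have hA1 : Tendsto (fun j => alpha0 b (n j) * Lb / (2 * L j)) atTop (nhds 1) :=
    (alpha0_norm b hb).comp hn
  have halphatop : Tendsto (fun j => alpha0 b (n j)) atTop atTop := (alpha0_atTop b hb).comp hn
  have heq : ∀ᶠ j in atTop, a j = alpha0 b (n j) - ε j := by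
    filter_upwards [halphatop.eventually_ge_atTop 0] with j hj
    simp only [hadef, htdef, alphaNat, hεdef, Int.fract]
    push_cast
    rw [show ((⌊alpha0 b (n j)⌋.toNat : ℕ) : ℝ) = ((⌊alpha0 b (n j)⌋ : ℤ) : ℝ) from by
      exact_mod_cast congrArg (Int.cast : ℤ → ℝ) (Int.toNat_of_nonneg (Int.floor_nonneg.mpr hj))]
    ring
  have hε01 : ∀ j, 0 ≤ ε j ∧ ε j < 1 := fun j => ⟨Int.fract_nonneg _, Int.fract_lt_one _⟩
  have hεquot : Tendsto (fun j => ε j * Lb / (2 * L j)) atTop (nhds 0) := by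
    have hg0 : Tendsto (fun j => Lb / (2 * L j)) atTop (nhds 0) := by
      have := hinvL.const_mul (Lb / 2)
      rw [mul_zero] at this
      have h2 : ∀ j, Lb / 2 * (L j)⁻¹ = Lb / (2 * L j) := fun j => by ring
      exact this.congr h2
    refine squeeze_zero' ?_ ?_ hg0
    · filter_upwards [hLtop.eventually_gt_atTop 0] with j hL
      have := (hε01 j).1; positivity
    · filter_upwards [hLtop.eventually_gt_atTop 0] with j hL
      have h1 := (hε01 j).2
      have h0 := (hε01 j).1
      gcongr
      nlinarith
  have haL : Tendsto (fun j => a j * Lb / (2 * L j)) atTop (nhds 1) := by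
    have h := hA1.sub hεquot
    rw [sub_zero] at h
    refine h.congr' ?_
    filter_upwards [heq] with j hj
    rw [hj]; ring
  have hatop : Tendsto a atTop atTop := by
    refine tendsto_atTop_mono' atTop ?_ (halphatop.atTop_add tendsto_const_nhds (C := -1))
    filter_upwards [heq] with j hj
    have := (hε01 j).2
    rw [hj]; linarith
  have htN : Tendsto t atTop atTop := tendsto_natCast_atTop_iff.mp hatop
  have hinv1 : Tendsto (fun j => (a j * Lb / (2 * L j))⁻¹) atTop (nhds 1) := by
    have := haL.inv₀ one_ne_zero
    simpa using this
  have haoverL : Tendsto (fun j => a j / L j) atTop (nhds (2 / Lb)) := by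
    have h := haL.mul (tendsto_const_nhds (x := 2 / Lb))
    rw [one_mul] at h
    refine h.congr' ?_
    filter_upwards [hLtop.eventually_gt_atTop 0] with j hL
    field_simp
  have hlogaL : Tendsto (fun j => Real.log (a j) / L j) atTop (nhds 0) := by
    have hub : Tendsto (fun j => (Real.log (4 / Lb) + Real.log (L j)) / L j) atTop (nhds 0) := by
      have h1 : Tendsto (fun j => Real.log (4 / Lb) * (L j)⁻¹) atTop (nhds 0) := by
        have := hinvL.const_mul (Real.log (4 / Lb)); rwa [mul_zero] at this
      have h2 : Tendsto (fun j => Real.log (L j) / L j) atTop (nhds 0) := loglog_div_log.comp hn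
      have := h1.add h2
      rw [add_zero] at this
      refine this.congr fun j => by rw [add_div]; ring_nf
    refine squeeze_zero' ?_ ?_ hub
    · filter_upwards [hatop.eventually_ge_atTop 1, hLtop.eventually_gt_atTop 0] with j h1 hL
      have : (0:ℝ) ≤ Real.log (a j) := Real.log_nonneg h1
      positivity
    · filter_upwards [hatop.eventually_ge_atTop 1, hLtop.eventually_gt_atTop 0,
        haoverL.eventually (gt_mem_nhds (show (2:ℝ)/Lb < 4/Lb from by
          rw [div_lt_div_iff₀ hLb hLb]; nlinarith))] with j h1 hL h4
      have ha4 : a j ≤ 4 / Lb * L j := by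
        rw [div_lt_iff₀ hL] at h4
        linarith
      have h40 : (0:ℝ) < 4 / Lb := by positivity
      calc Real.log (a j) / L j ≤ Real.log (4 / Lb * L j) / L j := by
            have hlog : Real.log (a j) ≤ Real.log (4 / Lb * L j) :=
              Real.log_le_log (lt_of_lt_of_le one_pos h1) ha4
            gcongr
        _ = (Real.log (4 / Lb) + Real.log (L j)) / L j := by
            rw [Real.log_mul (ne_of_gt h40) (ne_of_gt hL)]

  have hL2n : Tendsto (fun j => (L j) ^ 2 / n j) atTop (nhds 0) := by
    have h := (Real.tendsto_pow_log_div_mul_add_atTop 1 0 2 one_ne_zero).comp hn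
    refine h.congr fun j => by simp; rfl
  have han : Tendsto (fun j => a j / n j) atTop (nhds 0) := by
    have h := (haoverL.mul hL2n).mul hinvL
    rw [mul_zero] at h
    refine h.congr' ?_
    filter_upwards [hLtop.eventually_gt_atTop 0, hn.eventually_gt_atTop 0] with j hL hn0
    field_simp
  have ha2n : Tendsto (fun j => 2 * a j ^ 2 / n j) atTop (nhds 0) := by
    have h := (haoverL.mul haoverL).mul (hL2n.const_mul 2)
    rw [mul_zero, mul_zero] at h
    refine h.congr' ?_
    filter_upwards [hLtop.eventually_gt_atTop 0, hn.eventually_gt_atTop 0] with j hL hn0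
    field_simp
  have hS : Tendsto (fun j => (∑ i ∈ Finset.range (t j), Real.log (n j - i)) - a j * L j)
      atTop (nhds 0) := by
    refine squeeze_zero_norm' ?_ ha2n
    filter_upwards [hatop.eventually_ge_atTop 1, hn.eventually_gt_atTop 0,
      han.eventually (gt_mem_nhds (show (0:ℝ) < 1/2 by norm_num)),
      hLtop.eventually_gt_atTop 0] with j h1 hn0 hhalf hL
    have h2a : 2 * a j ≤ n j := by
      rw [div_lt_iff₀ hn0] at hhalf
      linarith
    have hterm : ∀ i ∈ Finset.range (t j), ‖Real.log (n j - i) - L j‖ ≤ 2 * a j / n j := by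
      intro i hi
      rw [Finset.mem_range] at hi
      have hia : (i:ℝ) + 1 ≤ a j := by
        have h' : (i+1 : ℕ) ≤ t j := Nat.succ_le_of_lt hi
        exact show ((i:ℝ) + 1 ≤ ((t j : ℕ) : ℝ)) from by exact_mod_cast h'
      have hni : (0:ℝ) < n j - i := by nlinarith
      have hmono : Real.log (n j - i) ≤ L j := Real.log_le_log hni (by nlinarith)
      rw [Real.norm_eq_abs, abs_of_nonpos (by linarith), neg_sub]
      have hdiv : L j - Real.log (n j - i) = Real.log (n j / (n j - i)) := by
        rw [Real.log_div (ne_of_gt hn0) (ne_of_gt hni)]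
      rw [hdiv]
      have hlog1 : Real.log (n j / (n j - i)) ≤ n j / (n j - i) - 1 :=
        Real.log_le_sub_one_of_pos (by positivity)
      have heq2 : n j / (n j - i) - 1 = (i:ℝ) / (n j - i) := by
        field_simp
        ring
      have hfinal : (i:ℝ) / (n j - i) ≤ 2 * a j / n j := by
        rw [div_le_div_iff₀ hni hn0]
        nlinarith
      linarith [hlog1, heq2 ▸ hlog1]
    calc ‖∑ i ∈ Finset.range (t j), Real.log (n j - i) - a j * L j‖
        = ‖∑ i ∈ Finset.range (t j), (Real.log (n j - i) - L j)‖ := by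
          congr 1
          rw [Finset.sum_sub_distrib, Finset.sum_const, Finset.card_range, nsmul_eq_mul]
      _ ≤ ∑ i ∈ Finset.range (t j), ‖Real.log (n j - i) - L j‖ := norm_sum_le _ _
      _ ≤ ∑ _i ∈ Finset.range (t j), 2 * a j / n j := Finset.sum_le_sum hterm
      _ = (t j) * (2 * a j / n j) := by rw [Finset.sum_const, Finset.card_range]; simp
      _ = 2 * a j ^ 2 / n j := by
          show a j * (2 * a j / n j) = 2 * a j ^ 2 / n j
          field_simp

  have hG : Tendsto (fun j => (Real.log (t j).factorial - (a j * Real.log (a j) - a j)) / L j)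
      atTop (nhds 0) := by
    have hsl : Tendsto (fun j => Real.log (Stirling.stirlingSeq (t j))) atTop
        (nhds (Real.log (Real.sqrt Real.pi))) :=
      (Stirling.tendsto_stirlingSeq_sqrt_pi.comp htN).log
        (ne_of_gt (Real.sqrt_pos.mpr Real.pi_pos))
    have hmain : Tendsto (fun j => (Real.log (Stirling.stirlingSeq (t j)) + 1/2 * Real.log 2
        + 1/2 * Real.log (a j)) / L j) atTop (nhds 0) := by
      have h1 := hsl.mul hinvL
      rw [mul_zero] at h1
      have h2 := hinvL.const_mul (1/2 * Real.log 2)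
      rw [mul_zero] at h2
      have h3 := hlogaL.const_mul (1/2)
      rw [mul_zero] at h3
      have h := (h1.add h2).add h3
      rw [add_zero, add_zero] at h
      refine h.congr fun j => ?_
      field_simp
    refine hmain.congr' ?_
    filter_upwards [htN.eventually_ge_atTop 1, hatop.eventually_ge_atTop 1] with j ht1 ha1
    have ha0 : (0:ℝ) < a j := lt_of_lt_of_le one_pos ha1
    have hfact : Real.log (t j).factorial = Real.log (Stirling.stirlingSeq (t j))
        + 1/2 * Real.log (2 * a j) + a j * Real.log (a j / Real.exp 1) := by
      have := Stirling.log_stirlingSeq_formula (t j)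
      have h2 : (↑(t j) : ℝ) = a j := rfl
      rw [h2] at this
      linarith
    rw [hfact, Real.log_mul two_ne_zero (ne_of_gt ha0),
      Real.log_div (ne_of_gt ha0) (Real.exp_ne_zero 1), Real.log_exp]
    ring_nf
  -- identity for log muR
  have hlogmu : ∀ᶠ j in atTop, Real.log (muR q (t j) (n j)) =
      (∑ i ∈ Finset.range (t j), Real.log (n j - i)) - Real.log (t j).factorial
        - (a j * (a j - 1) / 2) * Lb := by
    filter_upwards [hatop.eventually_ge_atTop 1, hn.eventually_gt_atTop 0,
      han.eventually (gt_mem_nhds (show (0:ℝ) < 1/2 by norm_num))] with j ha1 hn0 hhalf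
    have h2a : a j < n j := by
      rw [div_lt_iff₀ hn0] at hhalf
      nlinarith
    have hfac : ∀ i ∈ Finset.range (t j), (0:ℝ) < n j - i := by
      intro i hi
      rw [Finset.mem_range] at hi
      have hia : (i:ℝ) + 1 ≤ a j := by
        have h' : (i+1 : ℕ) ≤ t j := Nat.succ_le_of_lt hi
        exact show ((i:ℝ) + 1 ≤ ((t j : ℕ) : ℝ)) from by exact_mod_cast h'
      nlinarith
    have hprodpos : 0 < ∏ i ∈ Finset.range (t j), (n j - (i:ℝ)) :=
      Finset.prod_pos hfac
    have hfactpos : (0:ℝ) < ((t j).factorial : ℝ) := by positivity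
    have hqpow : (0:ℝ) < q ^ (t j).choose 2 := by positivity
    have hchoose : (((t j).choose 2 : ℕ) : ℝ) = a j * (a j - 1) / 2 := Nat.cast_choose_two ℝ (t j)
    rw [muR, Real.log_mul (by positivity) (ne_of_gt hqpow),
      Real.log_div (ne_of_gt hprodpos) (ne_of_gt hfactpos),
      Real.log_prod (fun i hi => ne_of_gt (hfac i hi)),
      Real.log_pow, hchoose, hqb]
    ring
  have hC2 : ∀ j, alpha0 b (n j) * Lb = 2 * L j - 2 * Real.log (Real.logb b (n j))
      + 2 - 2 * Real.log 2 + Lb := fun j => alpha0_mul_log b (n j) hb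
  -- middle factor
  have hM0 : Tendsto (fun j => Real.log 2 + Real.log (Real.logb b (n j)) - Real.log (a j))
      atTop (nhds 0) := by
    have h := (haL.log one_ne_zero).neg
    rw [Real.log_one, neg_zero] at h
    refine h.congr' ?_
    filter_upwards [hatop.eventually_ge_atTop 1, hLtop.eventually_gt_atTop 0] with j ha1 hL
    have ha0 : (0:ℝ) < a j := lt_of_lt_of_le one_pos ha1
    have hlgb : Real.logb b (n j) = L j / Lb := rfl
    have hlgbpos : 0 < Real.logb b (n j) := by rw [hlgb]; positivity
    have harg : a j * Lb / (2 * L j) = a j / (2 * Real.logb b (n j)) := by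
      rw [hlgb, show (2:ℝ) * (L j / Lb) = (2 * L j) / Lb from by ring, div_div_eq_mul_div]
    rw [harg, Real.log_div (ne_of_gt ha0) (by positivity),
      Real.log_mul two_ne_zero (ne_of_gt hlgbpos)]
    ring
  have hMterm : Tendsto (fun j => (a j / L j) *
      (Real.log 2 + Real.log (Real.logb b (n j)) - Real.log (a j))) atTop (nhds 0) := by
    have h := haoverL.mul hM0
    rwa [mul_zero] at h
  have hSL : Tendsto (fun j =>
      ((∑ i ∈ Finset.range (t j), Real.log (n j - i)) - a j * L j) / L j) atTop (nhds 0) := by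
    have h := hS.mul hinvL
    rw [zero_mul] at h
    exact h.congr fun j => (div_eq_mul_inv _ _).symm
  have hεterm : Tendsto (fun j => ε j * (a j * Lb / (2 * L j) - 1)) atTop (nhds 0) := by
    have habs : Tendsto (fun j => |a j * Lb / (2 * L j) - 1|) atTop (nhds 0) := by
      have := (haL.sub (tendsto_const_nhds (x := (1:ℝ)))).abs
      rwa [sub_self, abs_zero] at this
    refine squeeze_zero_norm' ?_ habs
    filter_upwards [] with j
    rw [Real.norm_eq_abs, abs_mul]
    calc |ε j| * |a j * Lb / (2 * L j) - 1| ≤ 1 * |a j * Lb / (2 * L j) - 1| := by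
          apply mul_le_mul_of_nonneg_right ?_ (abs_nonneg _)
          rw [abs_of_nonneg (hε01 j).1]
          exact (hε01 j).2.le
      _ = _ := one_mul _
  have hfinal : Tendsto (fun j =>
      ((∑ i ∈ Finset.range (t j), Real.log (n j - i)) - a j * L j) / L j
      - (Real.log (t j).factorial - (a j * Real.log (a j) - a j)) / L j
      + (a j / L j) * (Real.log 2 + Real.log (Real.logb b (n j)) - Real.log (a j))
      + ε j * (a j * Lb / (2 * L j) - 1)) atTop (nhds 0) := by
    have h := ((hSL.sub hG).add hMterm).add hεterm
    rwa [sub_zero, add_zero, add_zero] at h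
  refine hfinal.congr' ?_
  filter_upwards [heq, hlogmu, hLtop.eventually_gt_atTop 0] with j hjeq hjmu hL
  have hLne : L j ≠ 0 := ne_of_gt hL
  have hll : Real.log (Real.logb b (n j)) =
      L j + 1 - Real.log 2 + Lb/2 - a j * Lb / 2 - ε j * Lb / 2 := by
    have hc := hC2 j
    have : alpha0 b (n j) = a j + ε j := by rw [hjeq]; ring
    rw [this] at hc
    nlinarith [hc]
  rw [show muHat q b (n j) = Real.log (muR q (t j) (n j)) / L j from rfl,
    show Int.fract (alpha0 b (n j)) = ε j from rfl, hjmu, hll]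
  field_simp
  ring

set_option maxHeartbeats 1000000 in
/-- Fix `0 < p ≤ 1 − 1/e²` and let `b = 1/(1−p)`, `q = 1−p`.  If `(n_j)` and
`(n'_j)` are real sequences tending to infinity with `n'_j/n_j → 1`, then
`f'(n'_j) = 1/α(n_j) + (1 − μ̂(n_j))/α(n_j)² + o(1/log² n_j)`. -/
theorem deriv_fEst_nearby (p : ℝ) (hp0 : 0 < p) (hp : p ≤ 1 - 1 / Real.exp 1 ^ 2)
    (nseq nseq' : ℕ → ℝ)
    (hn : Tendsto nseq atTop atTop) (hn' : Tendsto nseq' atTop atTop)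
    (hratio : Tendsto (fun j => nseq' j / nseq j) atTop (nhds 1)) :
    Tendsto (fun j =>
        (deriv (fEst (1 / (1 - p))) (nseq' j)
          - 1 / (alphaNat (1 / (1 - p)) (nseq j) : ℝ)
          - (1 - muHat (1 - p) (1 / (1 - p)) (nseq j))
              / (alphaNat (1 / (1 - p)) (nseq j) : ℝ) ^ 2)
        * Real.log (nseq j) ^ 2) atTop (nhds 0) := by
  have hq0 : 0 < 1 - p := by
    have h2 : 0 < 1 / Real.exp 1 ^ 2 := by positivity
    linarith
  set q : ℝ := 1 - p with hqdef
  set b : ℝ := 1 / q with hbdef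
  have hq1 : q < 1 := by rw [hqdef]; linarith
  have hb : 1 < b := by rw [hbdef]; exact one_lt_one_div hq0 hq1
  have hLb : 0 < Real.log b := Real.log_pos hb
  set Lb : ℝ := Real.log b with hLbdef
  have hLbne : Lb ≠ 0 := ne_of_gt hLb
  have hqb : Real.log q = -Lb := by
    rw [hLbdef, hbdef, one_div, Real.log_inv]; ring
  set c : ℝ := 2 / Lb + 1 with hcdef
  set L : ℕ → ℝ := fun j => Real.log (nseq j) with hLdef
  set L' : ℕ → ℝ := fun j => Real.log (nseq' j) with hL'def
  set t : ℕ → ℕ := fun j => alphaNat b (nseq j) with htdef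
  set a : ℕ → ℝ := fun j => (t j : ℝ) with hadef
  set ε : ℕ → ℝ := fun j => Int.fract (alpha0 b (nseq j)) with hεdef
  set D' : ℕ → ℝ := fun j => Dden b (nseq' j) with hD'def
  set δ : ℕ → ℝ := fun j => D' j - a j - ε j + c with hδdef
  set k : ℕ → ℝ := fun j => muHat q b (nseq j) - ε j with hkdef
  have hLtop : Tendsto L atTop atTop := Real.tendsto_log_atTop.comp hn
  have hL'top : Tendsto L' atTop atTop := Real.tendsto_log_atTop.comp hn'
  have hinvL : Tendsto (fun j => (L j)⁻¹) atTop (nhds 0) := tendsto_inv_atTop_zero.comp hLtop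
  have hinvL' : Tendsto (fun j => (L' j)⁻¹) atTop (nhds 0) := tendsto_inv_atTop_zero.comp hL'top
  have hA1 : Tendsto (fun j => alpha0 b (nseq j) * Lb / (2 * L j)) atTop (nhds 1) :=
    (alpha0_norm b hb).comp hn
  have hA1' : Tendsto (fun j => alpha0 b (nseq' j) * Lb / (2 * L' j)) atTop (nhds 1) :=
    (alpha0_norm b hb).comp hn'
  have halphatop : Tendsto (fun j => alpha0 b (nseq j)) atTop atTop := (alpha0_atTop b hb).comp hn
  have halphatop' : Tendsto (fun j => alpha0 b (nseq' j)) atTop atTop :=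
    (alpha0_atTop b hb).comp hn'
  have heq : ∀ᶠ j in atTop, a j = alpha0 b (nseq j) - ε j := by
    filter_upwards [halphatop.eventually_ge_atTop 0] with j hj
    simp only [hadef, htdef, alphaNat, hεdef, Int.fract]
    push_cast
    rw [show ((⌊alpha0 b (nseq j)⌋.toNat : ℕ) : ℝ) = ((⌊alpha0 b (nseq j)⌋ : ℤ) : ℝ) from by
      exact_mod_cast congrArg (Int.cast : ℤ → ℝ) (Int.toNat_of_nonneg (Int.floor_nonneg.mpr hj))]
    ring
  have hε01 : ∀ j, 0 ≤ ε j ∧ ε j < 1 := fun j => ⟨Int.fract_nonneg _, Int.fract_lt_one _⟩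
  have hεquot : Tendsto (fun j => ε j * Lb / (2 * L j)) atTop (nhds 0) := by
    have hg0 : Tendsto (fun j => Lb / (2 * L j)) atTop (nhds 0) := by
      have := hinvL.const_mul (Lb / 2)
      rw [mul_zero] at this
      have h2 : ∀ j, Lb / 2 * (L j)⁻¹ = Lb / (2 * L j) := fun j => by ring
      exact this.congr h2
    refine squeeze_zero' ?_ ?_ hg0
    · filter_upwards [hLtop.eventually_gt_atTop 0] with j hL
      have := (hε01 j).1; positivity
    · filter_upwards [hLtop.eventually_gt_atTop 0] with j hL
      have h1 := (hε01 j).2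
      have h0 := (hε01 j).1
      gcongr
      nlinarith
  have haL : Tendsto (fun j => a j * Lb / (2 * L j)) atTop (nhds 1) := by
    have h := hA1.sub hεquot
    rw [sub_zero] at h
    refine h.congr' ?_
    filter_upwards [heq] with j hj
    rw [hj]; ring
  have hatop : Tendsto a atTop atTop := by
    refine tendsto_atTop_mono' atTop ?_ (halphatop.atTop_add tendsto_const_nhds (C := -1))
    filter_upwards [heq] with j hj
    have := (hε01 j).2
    rw [hj]; linarith
  have hr : Tendsto (fun j => L j / a j) atTop (nhds (Lb / 2)) := by
    have h := (haL.inv₀ one_ne_zero).mul (tendsto_const_nhds (x := Lb / 2))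
    rw [inv_one, one_mul] at h
    refine h.congr' ?_
    filter_upwards [hLtop.eventually_gt_atTop 0, hatop.eventually_ge_atTop 1] with j hL ha1
    have ha0 : (0:ℝ) < a j := lt_of_lt_of_le one_pos ha1
    field_simp
  -- facts about D'
  have hDalpha : ∀ j, D' j = alpha0 b (nseq' j) - c := fun j => Dden_eq b (nseq' j)
  have hD'norm : Tendsto (fun j => D' j * Lb / (2 * L' j)) atTop (nhds 1) := by
    have hc0 : Tendsto (fun j => c * Lb / (2 * L' j)) atTop (nhds 0) := by
      have := hinvL'.const_mul (c * Lb / 2)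
      rw [mul_zero] at this
      refine this.congr fun j => by ring
    have h := hA1'.sub hc0
    rw [sub_zero] at h
    refine h.congr fun j => by rw [hDalpha j]; ring
  have hD'top : Tendsto D' atTop atTop := by
    refine tendsto_atTop_mono' atTop ?_ (halphatop'.atTop_add tendsto_const_nhds (C := -c))
    filter_upwards [] with j
    rw [hDalpha j]
    exact le_of_eq (by ring)
  have hs' : Tendsto (fun j => L' j / D' j) atTop (nhds (Lb / 2)) := by
    have h := (hD'norm.inv₀ one_ne_zero).mul (tendsto_const_nhds (x := Lb / 2))
    rw [inv_one, one_mul] at h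
    refine h.congr' ?_
    filter_upwards [hL'top.eventually_gt_atTop 0, hD'top.eventually_gt_atTop 0] with j hL hD
    field_simp
  have hw : Tendsto (fun j => L j / L' j) atTop (nhds 1) := by
    have hdiff : Tendsto (fun j => L' j - L j) atTop (nhds 0) := by
      have hinv : Tendsto (fun j => nseq' j / nseq j) atTop (nhds 1) := hratio
      have h := hinv.log one_ne_zero
      rw [Real.log_one] at h
      refine h.congr' ?_
      filter_upwards [hn.eventually_gt_atTop 0, hn'.eventually_gt_atTop 0] with j h1 h2
      rw [Real.log_div (ne_of_gt h2) (ne_of_gt h1)]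
    have h := (tendsto_const_nhds (x := (1:ℝ))).sub (hdiff.mul hinvL')
    rw [mul_zero, sub_zero] at h
    refine h.congr' ?_
    filter_upwards [hL'top.eventually_gt_atTop 0] with j hL
    field_simp
    ring
  have hs : Tendsto (fun j => L j / D' j) atTop (nhds (Lb / 2)) := by
    have h := hw.mul hs'
    rw [one_mul] at h
    refine h.congr' ?_
    filter_upwards [hL'top.eventually_gt_atTop 0, hD'top.eventually_gt_atTop 0] with j hL hD
    field_simp
  have hδ : Tendsto δ atTop (nhds 0) := by
    have hdiff : Tendsto (fun j => L' j - L j) atTop (nhds 0) := by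
      have h := hratio.log one_ne_zero
      rw [Real.log_one] at h
      refine h.congr' ?_
      filter_upwards [hn.eventually_gt_atTop 0, hn'.eventually_gt_atTop 0] with j h1 h2
      rw [Real.log_div (ne_of_gt h2) (ne_of_gt h1)]
    have hlgb : Tendsto (fun j => Real.log (L' j) - Real.log (L j)) atTop (nhds 0) := by
      have hLL : Tendsto (fun j => L' j / L j) atTop (nhds 1) := by
        have h := (hw.inv₀ one_ne_zero)
        rw [inv_one] at h
        refine h.congr' ?_
        filter_upwards [hLtop.eventually_gt_atTop 0, hL'top.eventually_gt_atTop 0] with j h1 h2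
        rw [inv_div]
      have h := hLL.log one_ne_zero
      rw [Real.log_one] at h
      refine h.congr' ?_
      filter_upwards [hLtop.eventually_gt_atTop 0, hL'top.eventually_gt_atTop 0] with j h1 h2
      rw [Real.log_div (ne_of_gt h2) (ne_of_gt h1)]
    have h := (hdiff.const_mul (2/Lb)).sub (hlgb.const_mul (2/Lb))
    rw [mul_zero, sub_zero] at h
    refine h.congr' ?_
    filter_upwards [heq, hLtop.eventually_gt_atTop 0, hL'top.eventually_gt_atTop 0]
      with j hjeq h1 h2
    have hδval : δ j = alpha0 b (nseq' j) - alpha0 b (nseq j) := by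
      rw [hδdef]
      simp only
      rw [hDalpha j, hjeq]
      ring
    rw [hδval]
    have e1 : Real.log (Real.logb b (nseq j)) = Real.log (L j) - Real.log Lb := by
      rw [show Real.logb b (nseq j) = L j / Lb from rfl,
        Real.log_div (ne_of_gt h1) hLbne]
    have e2 : Real.log (Real.logb b (nseq' j)) = Real.log (L' j) - Real.log Lb := by
      rw [show Real.logb b (nseq' j) = L' j / Lb from rfl,
        Real.log_div (ne_of_gt h2) hLbne]
    simp only [alpha0, Real.logb] at e1 e2 ⊢
    rw [e1, e2]
    rw [← hLbdef]
    field_simp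
    ring
  have hk : Tendsto k atTop (nhds 0) := muHat_sub_fract b q hb hq0 hqb nseq hn
  have hD'ne : ∀ᶠ j in atTop, D' j ≠ 0 := by
    filter_upwards [hD'top.eventually_gt_atTop 0] with j h; exact ne_of_gt h
  have hderiv : ∀ᶠ j in atTop, deriv (fEst b) (nseq' j)
      = (D' j - (2 / Lb) * (1 - 1 / L' j)) / (D' j) ^ 2 := by
    filter_upwards [hn'.eventually_gt_atTop 0, hL'top.eventually_gt_atTop 1, hD'ne]
      with j h0 h1 hD
    have hlb : 0 < Real.logb b (nseq' j) := by
      rw [show Real.logb b (nseq' j) = L' j / Lb from rfl]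
      have : (0:ℝ) < L' j := lt_trans one_pos h1
      positivity
    exact deriv_fEst_eq b hb (nseq' j) h0 h1 hlb hD
  -- model function
  have hΨ : Tendsto (fun j =>
      c * ((L j / a j) * (L j / D' j)) - (L j / a j) ^ 2 - (2 / Lb) * (L j / D' j) ^ 2
      + ε j * ((L j / a j) * ((L j / a j) - (L j / D' j)))
      - δ j * ((L j / a j) * (L j / D' j))
      + k j * (L j / a j) ^ 2
      + (2 / Lb) * ((L j / L' j) * (L j / D' j) ^ 2 * (L j)⁻¹)) atTop (nhds 0) := by
    have hrsq : Tendsto (fun j => (L j / a j) ^ 2) atTop (nhds ((Lb/2) ^ 2)) := by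
      have h := hr.mul hr
      rw [show Lb/2*(Lb/2) = (Lb/2)^2 from (sq _).symm] at h
      refine h.congr fun j => (sq _).symm
    have hssq : Tendsto (fun j => (L j / D' j) ^ 2) atTop (nhds ((Lb/2) ^ 2)) := by
      have h := hs.mul hs
      rw [show Lb/2*(Lb/2) = (Lb/2)^2 from (sq _).symm] at h
      refine h.congr fun j => (sq _).symm
    have h1 : Tendsto (fun j => c * ((L j / a j) * (L j / D' j)) - (L j / a j) ^ 2
        - (2 / Lb) * (L j / D' j) ^ 2) atTop (nhds 0) := by
      have h := (((hr.mul hs).const_mul c).sub hrsq).sub (hssq.const_mul (2 / Lb))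
      have hval : c * (Lb/2 * (Lb/2)) - (Lb/2) ^ 2 - 2 / Lb * (Lb/2) ^ 2 = 0 := by
        rw [hcdef]
        field_simp
        ring
      rwa [hval] at h
    have h2 : Tendsto (fun j => ε j * ((L j / a j) * ((L j / a j) - (L j / D' j))))
        atTop (nhds 0) := by
      have hg : Tendsto (fun j => |(L j / a j) * ((L j / a j) - (L j / D' j))|)
          atTop (nhds 0) := by
        have h := (hr.mul (hr.sub hs)).abs
        rwa [sub_self, mul_zero, abs_zero] at h
      refine squeeze_zero_norm' ?_ hg
      filter_upwards [] with j
      rw [Real.norm_eq_abs, abs_mul]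
      calc |ε j| * |(L j / a j) * ((L j / a j) - (L j / D' j))|
          ≤ 1 * |(L j / a j) * ((L j / a j) - (L j / D' j))| := by
            apply mul_le_mul_of_nonneg_right ?_ (abs_nonneg _)
            rw [abs_of_nonneg (hε01 j).1]
            exact (hε01 j).2.le
        _ = _ := one_mul _
    have h3 : Tendsto (fun j => δ j * ((L j / a j) * (L j / D' j))) atTop (nhds 0) := by
      have h := hδ.mul (hr.mul hs)
      rwa [zero_mul] at h
    have h4 : Tendsto (fun j => k j * (L j / a j) ^ 2) atTop (nhds 0) := by
      have h := hk.mul hrsq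
      rwa [zero_mul] at h
    have h5 : Tendsto (fun j => (2 / Lb) * ((L j / L' j) * (L j / D' j) ^ 2 * (L j)⁻¹))
        atTop (nhds 0) := by
      have h := ((hw.mul hssq).mul hinvL).const_mul (2 / Lb)
      rwa [mul_zero, mul_zero] at h
    have h := ((((h1.add h2).sub h3).add h4).add h5)
    rwa [add_zero, sub_zero, add_zero, add_zero] at h
  refine hΨ.congr' ?_
  filter_upwards [hderiv, hatop.eventually_ge_atTop 1, hD'ne, hLtop.eventually_gt_atTop 0,
    hL'top.eventually_gt_atTop 1] with j hjderiv ha1 hjD hjL hjL'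
  have ha0 : a j ≠ 0 := ne_of_gt (lt_of_lt_of_le one_pos ha1)
  have hL0 : L j ≠ 0 := ne_of_gt hjL
  have hL'0 : L' j ≠ 0 := ne_of_gt (lt_trans one_pos hjL')
  show _ = (deriv (fEst b) (nseq' j) - 1 / a j - (1 - muHat q b (nseq j)) / a j ^ 2) * L j ^ 2
  rw [hjderiv,
    show muHat q b (nseq j) = k j + ε j from by rw [hkdef]; ring,
    show δ j = D' j - a j - ε j + c from rfl,
    hcdef]
  field_simp
  ring
end
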